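/- arXiv:1102.2047 — 4 statements merged into one kernel-verified Lean document; each statement's English description precedes it below -/
import Mathlib

section
/- For every Young diagram λ, the sum of the squares of the contents of the addable corners of λ minus the sum of the squares of the contents of the removable corners of λ equals 2·|λ|, where |λ| is the number of cells of λ. -/
/-- A cell `c` is an addable corner of the Young diagram `μ` if `c ∉ μ` and
adding `c` to `μ` again yields a Young diagram (i.e. a finite lower set). -/
def YoungDiagram.IsAddableCorner (μ : YoungDiagram) (c : ℕ × ℕ) : Prop :=
  c ∉ μ ∧ IsLowerSet (↑(insert c μ.cells) : Set (ℕ × ℕ))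

/-- A cell `c` is a removable corner of the Young diagram `μ` if `c ∈ μ` and
removing `c` from `μ` again yields a Young diagram. -/
def YoungDiagram.IsRemovableCorner (μ : YoungDiagram) (c : ℕ × ℕ) : Prop :=
  c ∈ μ ∧ IsLowerSet (↑(μ.cells.erase c) : Set (ℕ × ℕ))

/-- The content of the cell `(i, j)` is `j - i`. -/
def cellContent (c : ℕ × ℕ) : ℤ := (c.2 : ℤ) - (c.1 : ℤ)

/-!
Row `i` of `μ` is followed by an addable cell of content `c i = rowLen i - i`, a corner iff
`i = 0` or row `i - 1` is longer, and ends in a cell of content `c i - 1`, a removable corner iff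
row `i + 1` is shorter. When rows `i` and `i + 1` have equal length neither is a corner, and
the two missing terms are both `(c i - 1) ^ 2`. Hence over the first `n ≥ colLen 0` rows the
difference of the two sums telescopes to
`c n ^ 2 + ∑ i < n, (c i ^ 2 - (c i - 1) ^ 2) = n ^ 2 + ∑ i < n, (2 rowLen i - 2 i - 1)
= 2 ∑ i < n, rowLen i = 2 |μ|`.
-/

open Finset

namespace YoungDiagram

variable {μ : YoungDiagram}

theorem rowLen_eq_zero_of_colLen_le {i : ℕ} (h : μ.colLen 0 ≤ i) : μ.rowLen i = 0 := by
  by_contra hne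
  exact (mem_iff_lt_colLen.1 (mem_iff_lt_rowLen.2 (Nat.pos_of_ne_zero hne))).not_ge h

theorem card_eq_sum_rowLen {n : ℕ} (hn : μ.colLen 0 ≤ n) :
    μ.card = ∑ i ∈ range n, μ.rowLen i := by
  have hmaps : (μ.cells : Set (ℕ × ℕ)).MapsTo Prod.fst (range n) := fun c hc =>
    mem_range.2 ((mem_iff_lt_colLen.1 (μ.up_left_mem le_rfl (Nat.zero_le c.2) hc)).trans_le hn)
  rw [YoungDiagram.card, card_eq_sum_card_fiberwise hmaps]
  exact sum_congr rfl fun i _ => (μ.rowLen_eq_card (i := i)).symm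

theorem isAddableCorner_iff {i j : ℕ} :
    μ.IsAddableCorner (i, j) ↔ j = μ.rowLen i ∧ (i = 0 ∨ μ.rowLen i < μ.rowLen (i - 1)) := by
  simp only [IsAddableCorner, mem_iff_lt_rowLen, not_lt]
  constructor
  · rintro ⟨hj, hlow⟩
    have hins : ∀ a b, a ≤ i → b ≤ j → (a = i ∧ b = j) ∨ b < μ.rowLen a := fun a b ha hb => by
      simpa [mem_iff_lt_rowLen] using hlow (Prod.mk_le_mk.2 ⟨ha, hb⟩) (by simp)
    have hleft := hins i (j - 1) le_rfl (Nat.sub_le j 1)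
    have hup := hins (i - 1) j (Nat.sub_le i 1) le_rfl
    omega
  · rintro ⟨rfl, hstep⟩
    refine ⟨le_rfl, ?_⟩
    rintro ⟨x, y⟩ ⟨a, b⟩ hle hmem
    obtain ⟨hax, hby⟩ := Prod.mk_le_mk.1 hle
    simp only [coe_insert, Set.mem_insert_iff, Prod.mk.injEq, mem_coe, mem_cells,
      mem_iff_lt_rowLen] at hmem ⊢
    rcases hmem with ⟨rfl, rfl⟩ | hxy
    · rcases hax.lt_or_eq with hax | rfl
      · have := μ.rowLen_anti a (x - 1) (by omega)
        omega
      · omega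
    · exact Or.inr (hby.trans_lt (hxy.trans_le (μ.rowLen_anti a x hax)))

theorem isRemovableCorner_iff {i j : ℕ} :
    μ.IsRemovableCorner (i, j) ↔ j + 1 = μ.rowLen i ∧ μ.rowLen (i + 1) < μ.rowLen i := by
  simp only [IsRemovableCorner, mem_iff_lt_rowLen]
  constructor
  · rintro ⟨hj, hlow⟩
    have hout : ∀ x y, i ≤ x → j ≤ y → y < μ.rowLen x → x = i ∧ y = j := by
      intro x y hx hy hxy
      by_contra hne
      simpa using hlow (Prod.mk_le_mk.2 ⟨hx, hy⟩)
        (by simpa [mem_iff_lt_rowLen, hxy] using hne : (x, y) ∈ (μ.cells.erase (i, j) : Set _))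
    have hright := mt (hout i (j + 1) le_rfl j.le_succ) (by omega)
    have hdown := mt (hout (i + 1) j i.le_succ le_rfl) (by omega)
    omega
  · rintro ⟨hj, hstep⟩
    refine ⟨by omega, ?_⟩
    rintro ⟨x, y⟩ ⟨a, b⟩ hle hmem
    obtain ⟨hax, hby⟩ := Prod.mk_le_mk.1 hle
    simp only [coe_erase, Set.mem_sdiff, Set.mem_singleton_iff, Prod.mk.injEq, mem_coe,
      mem_cells, mem_iff_lt_rowLen] at hmem ⊢
    refine ⟨hby.trans_lt (hmem.1.trans_le (μ.rowLen_anti a x hax)), ?_⟩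
    rintro ⟨rfl, rfl⟩
    rcases hax.lt_or_eq with hax | rfl
    · have := μ.rowLen_anti (a + 1) x hax
      omega
    · omega

theorem setOf_isAddableCorner_eq {n : ℕ} (hn : μ.colLen 0 ≤ n) :
    {c | μ.IsAddableCorner c} =
      ↑(((range (n + 1)).filter fun i => i = 0 ∨ μ.rowLen i < μ.rowLen (i - 1)).image
        fun i => (i, μ.rowLen i)) := by
  ext ⟨i, j⟩
  simp only [Set.mem_ofPred_eq, isAddableCorner_iff, coe_image, coe_filter, mem_range,
    Set.mem_image, Prod.mk.injEq]
  constructor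
  · rintro ⟨rfl, hstep⟩
    refine ⟨i, ⟨?_, hstep⟩, rfl, rfl⟩
    by_contra! hi
    rw [rowLen_eq_zero_of_colLen_le (by omega : μ.colLen 0 ≤ i),
      rowLen_eq_zero_of_colLen_le (by omega : μ.colLen 0 ≤ i - 1)] at hstep
    omega
  · rintro ⟨i, ⟨-, hstep⟩, rfl, rfl⟩
    exact ⟨rfl, hstep⟩

theorem setOf_isRemovableCorner_eq {n : ℕ} (hn : μ.colLen 0 ≤ n) :
    {c | μ.IsRemovableCorner c} =
      ↑(((range n).filter fun i => μ.rowLen (i + 1) < μ.rowLen i).image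
        fun i => (i, μ.rowLen i - 1)) := by
  ext ⟨i, j⟩
  simp only [Set.mem_ofPred_eq, isRemovableCorner_iff, coe_image, coe_filter, mem_range,
    Set.mem_image, Prod.mk.injEq]
  constructor
  · rintro ⟨hj, hstep⟩
    refine ⟨i, ⟨?_, hstep⟩, rfl, by omega⟩
    by_contra! hi
    rw [rowLen_eq_zero_of_colLen_le (by omega : μ.colLen 0 ≤ i)] at hstep
    omega
  · rintro ⟨i, ⟨-, hstep⟩, rfl, rfl⟩
    exact ⟨by omega, hstep⟩

variable (μ) in
theorem sum_range_sq_content_addable_sub_removable (n : ℕ) :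
    ∑ i ∈ range (n + 1),
        (if i = 0 ∨ μ.rowLen i < μ.rowLen (i - 1) then cellContent (i, μ.rowLen i) ^ 2 else 0) -
      ∑ i ∈ range n,
        (if μ.rowLen (i + 1) < μ.rowLen i then cellContent (i, μ.rowLen i - 1) ^ 2 else 0) =
      cellContent (n, μ.rowLen n) ^ 2 - n ^ 2 + 2 * ∑ i ∈ range n, (μ.rowLen i : ℤ) := by
  induction n with
  | zero => simp
  | succ n ih =>
    simp only [sum_range_succ] at ih ⊢
    simp only [Nat.add_sub_cancel, Nat.add_one_ne_zero, false_or]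
    by_cases hstep : μ.rowLen (n + 1) < μ.rowLen n
    · simp only [hstep, if_true, cellContent, Nat.cast_sub (Nat.one_le_of_lt hstep)] at ih ⊢
      push_cast
      linear_combination ih
    · have hflat : μ.rowLen (n + 1) = μ.rowLen n :=
        le_antisymm (μ.rowLen_anti n (n + 1) n.le_succ) (not_lt.1 hstep)
      simp only [hflat, lt_irrefl, if_false, cellContent] at ih ⊢
      push_cast
      linear_combination ih

end YoungDiagram

/-- The sum of the squares of the contents of the addable corners of a Young
diagram `μ`, minus the sum of the squares of the contents of its removable
corners, equals `2 |μ|`. -/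
theorem sum_sq_contents_addable_sub_removable (μ : YoungDiagram) :
    (∑ᶠ c ∈ {c | μ.IsAddableCorner c}, (cellContent c) ^ 2) -
      (∑ᶠ c ∈ {c | μ.IsRemovableCorner c}, (cellContent c) ^ 2) =
      2 * (μ.card : ℤ) := by
  have hinj {f : ℕ → ℕ} (s : Finset ℕ) : Set.InjOn (fun i => (i, f i)) s :=
    fun _ _ _ _ h => congrArg Prod.fst h
  rw [μ.setOf_isAddableCorner_eq le_rfl, μ.setOf_isRemovableCorner_eq le_rfl,
    finsum_mem_coe_finset, finsum_mem_coe_finset, sum_image (hinj _), sum_image (hinj _),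
    sum_filter, sum_filter, μ.sum_range_sq_content_addable_sub_removable,
    μ.card_eq_sum_rowLen le_rfl, μ.rowLen_eq_zero_of_colLen_le le_rfl]
  simp [cellContent]
end

section
/- Let ν be a Young diagram, α an addable corner of ν with content c(α), and λ = ν ∪ {α}. Then in the field of rational functions ℚ(u) one has the identity ∏_{a ∈ A(λ)} (u − c(a)) / ∏_{b ∈ R(λ)} (u − c(b)) = ((u − c(α) − 1)(u − c(α) + 1)/(u − c(α))²) · ∏_{a ∈ A(ν)} (u − c(a)) / ∏_{b ∈ R(ν)} (u − c(b)), where A(·) and R(·) denote the sets of addable and removable corners. -/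
/-!
Adding the cell `α = (i, j)` to `ν` takes `α` out of the addable corners and makes it a removable
corner, which accounts for the factor `(u - c(α))⁻²`. To the right of `α`, exactly one of two
things happens: `(i, j + 1)` becomes addable, or `(i - 1, j)` stops being removable; both cells
have content `c(α) + 1`. Below `α` the same dichotomy holds for `(i + 1, j)` and `(i, j - 1)`,
of content `c(α) - 1`. No other corner changes, so after clearing denominators the identity holds for any
function of the content with values in a commutative monoid.
-/

theorem finprod_mem_inter_pair {ι M : Type*} [CommMonoid M] {s : Set ι} {a b : ι}
    (hab : a ∈ s → b ∈ s → a ≠ b) (f : ι → M) :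
    ∏ᶠ x ∈ s ∩ {a, b}, f x = (∏ᶠ x ∈ s ∩ {a}, f x) * ∏ᶠ x ∈ s ∩ {b}, f x := by
  rw [Set.insert_eq, Set.inter_union_distrib_left]
  refine finprod_mem_union ?_ ((Set.finite_singleton a).subset Set.inter_subset_right)
    ((Set.finite_singleton b).subset Set.inter_subset_right)
  rw [Set.disjoint_left]
  rintro x ⟨hxs, rfl⟩ ⟨-, rfl⟩
  exact hab hxs hxs rfl

theorem RatFunc.X_sub_intCast_ne_zero {K : Type*} [Field K] (z : ℤ) :
    (RatFunc.X : RatFunc K) - z ≠ 0 := by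
  rw [← map_intCast (algebraMap (Polynomial K) (RatFunc K)), ← RatFunc.algebraMap_X, ← map_sub]
  exact RatFunc.algebraMap_ne_zero (Polynomial.X_sub_C_ne_zero _)

namespace YoungDiagram

theorem isAddableCorner_iff_s5 {μ : YoungDiagram} {c : ℕ × ℕ} :
    μ.IsAddableCorner c ↔
      c ∉ μ ∧ (c.1 = 0 ∨ (c.1 - 1, c.2) ∈ μ) ∧ (c.2 = 0 ∨ (c.1, c.2 - 1) ∈ μ) := by
  obtain ⟨i, j⟩ := c
  refine and_congr_right fun _ => ⟨fun h => ⟨?_, ?_⟩, fun ⟨hi, hj⟩ => ?_⟩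
  · refine i.eq_zero_or_pos.imp_right fun hi => ?_
    have := h (Prod.mk_le_mk.2 ⟨i.sub_le 1, le_rfl⟩) (Finset.mem_insert_self _ _)
    simp only [Finset.coe_insert, Set.mem_insert_iff, Finset.mem_coe, mem_cells] at this
    exact this.resolve_left (by simp only [Prod.mk.injEq]; omega)
  · refine j.eq_zero_or_pos.imp_right fun hj => ?_
    have := h (Prod.mk_le_mk.2 ⟨le_rfl, j.sub_le 1⟩) (Finset.mem_insert_self _ _)
    simp only [Finset.coe_insert, Set.mem_insert_iff, Finset.mem_coe, mem_cells] at this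
    exact this.resolve_left (by simp only [Prod.mk.injEq]; omega)
  · rintro x ⟨a, b⟩ hy hx
    simp only [Finset.coe_insert, Set.mem_insert_iff, Finset.mem_coe, mem_cells] at hx ⊢
    rcases hx with rfl | hx
    · obtain ⟨ha, hb⟩ := Prod.mk_le_mk.1 hy
      by_cases hai : a < i
      · exact Or.inr (μ.up_left_mem (by omega) hb (hi.resolve_left (by omega)))
      by_cases hbj : b < j
      · exact Or.inr (μ.up_left_mem ha (by omega) (hj.resolve_left (by omega)))
      exact Or.inl (Prod.ext (by omega) (by omega))
    · exact Or.inr (μ.isLowerSet hy hx)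

theorem isRemovableCorner_iff_s5 {μ : YoungDiagram} {c : ℕ × ℕ} :
    μ.IsRemovableCorner c ↔ c ∈ μ ∧ (c.1 + 1, c.2) ∉ μ ∧ (c.1, c.2 + 1) ∉ μ := by
  obtain ⟨i, j⟩ := c
  rw [IsRemovableCorner, Finset.coe_erase]
  refine and_congr_right fun _ => ⟨fun h => ⟨fun hi => ?_, fun hj => ?_⟩, fun ⟨hi, hj⟩ => ?_⟩
  · simpa using h (Prod.mk_le_mk.2 ⟨i.le_succ, le_rfl⟩) (show (i + 1, j) ∈ _ by simpa using hi)
  · simpa using h (Prod.mk_le_mk.2 ⟨le_rfl, j.le_succ⟩) (show (i, j + 1) ∈ _ by simpa using hj)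
  · refine μ.isLowerSet.erase fun ⟨a, b⟩ hab hle => ?_
    obtain ⟨ha, hb⟩ := Prod.mk_le_mk.1 hle
    by_contra hne
    rw [Prod.mk.injEq] at hne
    rcases Nat.lt_or_ge i a with hia | hia
    · exact hi (μ.up_left_mem hia hb hab)
    · exact hj (μ.up_left_mem ha (by omega) hab)

theorem finite_setOf_isAddableCorner (μ : YoungDiagram) : {c | μ.IsAddableCorner c}.Finite := by
  refine (((μ.cells.finite_toSet.image fun p => (p.1 + 1, p.2)).union
    (μ.cells.finite_toSet.image fun p => (p.1, p.2 + 1))).insert (0, 0)).subset ?_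
  rintro ⟨i, j⟩ hc
  obtain ⟨-, hi, hj⟩ := isAddableCorner_iff_s5.1 hc
  by_cases hi0 : i = 0
  · by_cases hj0 : j = 0
    · subst hi0 hj0
      exact Set.mem_insert _ _
    · exact Or.inr (Or.inr ⟨_, hj.resolve_left hj0, Prod.ext rfl (by dsimp only; omega)⟩)
  · exact Or.inr (Or.inl ⟨_, hi.resolve_left hi0, Prod.ext (by dsimp only; omega) rfl⟩)

theorem finite_setOf_isRemovableCorner (μ : YoungDiagram) :
    {c | μ.IsRemovableCorner c}.Finite :=
  μ.cells.finite_toSet.subset fun _ hc => hc.1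

section InsertCell

variable {ν lam : YoungDiagram} {i j : ℕ} {M : Type*} [CommMonoid M]

theorem mem_iff_of_cells_eq_insert (hlam : lam.cells = insert (i, j) ν.cells) {c : ℕ × ℕ} :
    c ∈ lam ↔ c = (i, j) ∨ c ∈ ν := by
  rw [← mem_cells, hlam, Finset.mem_insert, mem_cells]

theorem IsAddableCorner.notMem_of_le (hij : ν.IsAddableCorner (i, j)) {c : ℕ × ℕ}
    (hc : (i, j) ≤ c) : c ∉ ν :=
  fun h => hij.1 (ν.isLowerSet hc h)

theorem IsAddableCorner.to_cells_eq_insert (hlam : lam.cells = insert (i, j) ν.cells) {c : ℕ × ℕ}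
    (hc : ν.IsAddableCorner c) (hne : c ≠ (i, j)) : lam.IsAddableCorner c := by
  obtain ⟨hcν, h1, h2⟩ := isAddableCorner_iff_s5.1 hc
  simp only [isAddableCorner_iff_s5, mem_iff_of_cells_eq_insert hlam]
  tauto

theorem IsAddableCorner.of_cells_eq_insert (hlam : lam.cells = insert (i, j) ν.cells) {c : ℕ × ℕ}
    (hc : lam.IsAddableCorner c) (hr : c ≠ (i, j + 1)) (hb : c ≠ (i + 1, j)) :
    ν.IsAddableCorner c := by
  obtain ⟨a, b⟩ := c
  simp only [isAddableCorner_iff_s5, mem_iff_of_cells_eq_insert hlam, ne_eq,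
    Prod.mk.injEq] at hc hr hb ⊢
  obtain ⟨hcl, h1, h2⟩ := hc
  have hne : ¬(a = i ∧ b = j) := fun h => hcl (Or.inl h)
  refine ⟨fun h => hcl (Or.inr h), ?_, ?_⟩
  · rcases h1 with h | h | h
    · exact Or.inl h
    · exact Or.inl (by omega)
    · exact Or.inr h
  · rcases h2 with h | h | h
    · exact Or.inl h
    · exact Or.inl (by omega)
    · exact Or.inr h

theorem IsAddableCorner.isRemovableCorner_of_cells_eq_insert (hij : ν.IsAddableCorner (i, j))
    (hlam : lam.cells = insert (i, j) ν.cells) : lam.IsRemovableCorner (i, j) := by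
  have hb : (i + 1, j) ∉ ν := hij.notMem_of_le (Prod.mk_le_mk.2 ⟨i.le_succ, le_rfl⟩)
  have hr : (i, j + 1) ∉ ν := hij.notMem_of_le (Prod.mk_le_mk.2 ⟨le_rfl, j.le_succ⟩)
  simp [isRemovableCorner_iff_s5, mem_iff_of_cells_eq_insert hlam, hb, hr]

theorem IsRemovableCorner.to_cells_eq_insert (hlam : lam.cells = insert (i, j) ν.cells) {c : ℕ × ℕ}
    (hc : ν.IsRemovableCorner c) (hu : c ≠ (i - 1, j)) (hl : c ≠ (i, j - 1)) :
    lam.IsRemovableCorner c := by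
  obtain ⟨a, b⟩ := c
  simp only [isRemovableCorner_iff_s5, mem_iff_of_cells_eq_insert hlam, ne_eq,
    Prod.mk.injEq] at hc hu hl ⊢
  obtain ⟨hcν, h1, h2⟩ := hc
  refine ⟨Or.inr hcν, ?_, ?_⟩
  · rintro (h | h)
    · omega
    · exact h1 h
  · rintro (h | h)
    · omega
    · exact h2 h

theorem IsRemovableCorner.of_cells_eq_insert (hlam : lam.cells = insert (i, j) ν.cells) {c : ℕ × ℕ}
    (hc : lam.IsRemovableCorner c) (hne : c ≠ (i, j)) : ν.IsRemovableCorner c := by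
  simp only [isRemovableCorner_iff_s5, mem_iff_of_cells_eq_insert hlam] at hc ⊢
  tauto

theorem insert_setOf_isAddableCorner (hij : ν.IsAddableCorner (i, j))
    (hlam : lam.cells = insert (i, j) ν.cells) :
    insert (i, j) {c | lam.IsAddableCorner c} =
      {c | ν.IsAddableCorner c} ∪ ({c | lam.IsAddableCorner c} ∩ {(i, j + 1), (i + 1, j)}) := by
  ext c
  simp only [Set.mem_insert_iff, Set.mem_union, Set.mem_inter_iff, Set.mem_ofPred_eq]
  constructor
  · rintro (rfl | hc)
    · exact Or.inl hij
    · by_cases hc' : c = (i, j + 1) ∨ c = (i + 1, j)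
      · exact Or.inr ⟨hc, hc'⟩
      · push Not at hc'
        exact Or.inl (hc.of_cells_eq_insert hlam hc'.1 hc'.2)
  · rintro (hc | ⟨hc, -⟩)
    · by_cases hne : c = (i, j)
      · exact Or.inl hne
      · exact Or.inr (hc.to_cells_eq_insert hlam hne)
    · exact Or.inr hc

theorem insert_setOf_isRemovableCorner (hij : ν.IsAddableCorner (i, j))
    (hlam : lam.cells = insert (i, j) ν.cells) :
    insert (i, j) {c | ν.IsRemovableCorner c} =
      {c | lam.IsRemovableCorner c} ∪ ({c | ν.IsRemovableCorner c} ∩ {(i - 1, j), (i, j - 1)}) := by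
  ext c
  simp only [Set.mem_insert_iff, Set.mem_union, Set.mem_inter_iff, Set.mem_ofPred_eq]
  constructor
  · rintro (rfl | hc)
    · exact Or.inl (hij.isRemovableCorner_of_cells_eq_insert hlam)
    · by_cases hc' : c = (i - 1, j) ∨ c = (i, j - 1)
      · exact Or.inr ⟨hc, hc'⟩
      · push Not at hc'
        exact Or.inl (hc.to_cells_eq_insert hlam hc'.1 hc'.2)
  · rintro (hc | ⟨hc, -⟩)
    · by_cases hne : c = (i, j)
      · exact Or.inl hne
      · exact Or.inr (hc.of_cells_eq_insert hlam hne)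
    · exact Or.inr hc

theorem disjoint_setOf_isAddableCorner (hij : ν.IsAddableCorner (i, j)) :
    Disjoint {c | ν.IsAddableCorner c} {(i, j + 1), (i + 1, j)} := by
  rw [Set.disjoint_right]
  rintro c (rfl | rfl) hc <;> simp [isAddableCorner_iff_s5, hij.1] at hc

/- At `i = 0` the cell `(i - 1, j)` is `(i, j)` itself, which is not in `ν`; likewise for
`(i, j - 1)` at `j = 0`. -/
theorem disjoint_setOf_isRemovableCorner (hij : ν.IsAddableCorner (i, j))
    (hlam : lam.cells = insert (i, j) ν.cells) :
    Disjoint {c | lam.IsRemovableCorner c}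
      ({c | ν.IsRemovableCorner c} ∩ {(i - 1, j), (i, j - 1)}) := by
  rw [Set.disjoint_right]
  have hmem : (i, j) ∈ lam := (mem_iff_of_cells_eq_insert hlam).2 (Or.inl rfl)
  rintro c ⟨hcν, rfl | rfl⟩ hc
  · have hi : i ≠ 0 := by
      rintro rfl
      exact hij.1 hcν.1
    have hb := (isRemovableCorner_iff_s5.1 hc).2.1
    simp only [Nat.sub_add_cancel (Nat.pos_of_ne_zero hi)] at hb
    exact hb hmem
  · have hj : j ≠ 0 := by
      rintro rfl
      exact hij.1 hcν.1
    have hr := (isRemovableCorner_iff_s5.1 hc).2.2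
    simp only [Nat.sub_add_cancel (Nat.pos_of_ne_zero hj)] at hr
    exact hr hmem

theorem isAddableCorner_right_iff (hij : ν.IsAddableCorner (i, j))
    (hlam : lam.cells = insert (i, j) ν.cells) :
    lam.IsAddableCorner (i, j + 1) ↔ ¬ν.IsRemovableCorner (i - 1, j) := by
  have hr : (i, j + 1) ∉ ν := hij.notMem_of_le (Prod.mk_le_mk.2 ⟨le_rfl, j.le_succ⟩)
  obtain ⟨hν, hup, -⟩ := isAddableCorner_iff_s5.1 hij
  rw [isAddableCorner_iff_s5, isRemovableCorner_iff_s5]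
  rcases Nat.eq_zero_or_pos i with rfl | hi
  · simp [mem_iff_of_cells_eq_insert hlam, hν, hr]
  · simp [mem_iff_of_cells_eq_insert hlam, hr, hν, hi.ne', hup.resolve_left hi.ne',
      Nat.sub_add_cancel hi]

theorem isAddableCorner_below_iff (hij : ν.IsAddableCorner (i, j))
    (hlam : lam.cells = insert (i, j) ν.cells) :
    lam.IsAddableCorner (i + 1, j) ↔ ¬ν.IsRemovableCorner (i, j - 1) := by
  have hb : (i + 1, j) ∉ ν := hij.notMem_of_le (Prod.mk_le_mk.2 ⟨i.le_succ, le_rfl⟩)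
  obtain ⟨hν, -, hleft⟩ := isAddableCorner_iff_s5.1 hij
  rw [isAddableCorner_iff_s5, isRemovableCorner_iff_s5]
  rcases Nat.eq_zero_or_pos j with rfl | hj
  · simp [mem_iff_of_cells_eq_insert hlam, hν, hb]
  · simp [mem_iff_of_cells_eq_insert hlam, hb, hν, hj.ne', hleft.resolve_left hj.ne',
      Nat.sub_add_cancel hj]

theorem finprod_right_mul_finprod_up (hij : ν.IsAddableCorner (i, j))
    (hlam : lam.cells = insert (i, j) ν.cells) (g : ℤ → M) :
    (∏ᶠ x ∈ {c | lam.IsAddableCorner c} ∩ {(i, j + 1)}, g (cellContent x)) *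
        ∏ᶠ x ∈ {c | ν.IsRemovableCorner c} ∩ {(i - 1, j)}, g (cellContent x) =
      g (cellContent (i, j) + 1) := by
  by_cases h : (i - 1, j) ∈ {c | ν.IsRemovableCorner c}
  · have hi : i ≠ 0 := by
      rintro rfl
      exact hij.1 h.1
    have hr : (i, j + 1) ∉ {c | lam.IsAddableCorner c} :=
      fun hr => (isAddableCorner_right_iff hij hlam).1 hr h
    rw [Set.inter_singleton_eq_empty.2 hr, Set.inter_singleton_of_mem h, finprod_mem_empty,
      finprod_mem_singleton, one_mul, cellContent, cellContent]
    congr 1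
    omega
  · have hr : (i, j + 1) ∈ {c | lam.IsAddableCorner c} :=
      (isAddableCorner_right_iff hij hlam).2 h
    rw [Set.inter_singleton_of_mem hr, Set.inter_singleton_eq_empty.2 h, finprod_mem_empty,
      finprod_mem_singleton, mul_one, cellContent, cellContent]
    congr 1
    push_cast
    ring

theorem finprod_below_mul_finprod_left (hij : ν.IsAddableCorner (i, j))
    (hlam : lam.cells = insert (i, j) ν.cells) (g : ℤ → M) :
    (∏ᶠ x ∈ {c | lam.IsAddableCorner c} ∩ {(i + 1, j)}, g (cellContent x)) *
        ∏ᶠ x ∈ {c | ν.IsRemovableCorner c} ∩ {(i, j - 1)}, g (cellContent x) =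
      g (cellContent (i, j) - 1) := by
  by_cases h : (i, j - 1) ∈ {c | ν.IsRemovableCorner c}
  · have hj : j ≠ 0 := by
      rintro rfl
      exact hij.1 h.1
    have hb : (i + 1, j) ∉ {c | lam.IsAddableCorner c} :=
      fun hb => (isAddableCorner_below_iff hij hlam).1 hb h
    rw [Set.inter_singleton_eq_empty.2 hb, Set.inter_singleton_of_mem h, finprod_mem_empty,
      finprod_mem_singleton, one_mul, cellContent, cellContent]
    congr 1
    omega
  · have hb : (i + 1, j) ∈ {c | lam.IsAddableCorner c} :=
      (isAddableCorner_below_iff hij hlam).2 h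
    rw [Set.inter_singleton_of_mem hb, Set.inter_singleton_eq_empty.2 h, finprod_mem_empty,
      finprod_mem_singleton, mul_one, cellContent, cellContent]
    congr 1
    push_cast
    ring

theorem finprod_addable_mul_finprod_removable_of_cells_eq_insert
    (hij : ν.IsAddableCorner (i, j)) (hlam : lam.cells = insert (i, j) ν.cells) (g : ℤ → M) :
    (∏ᶠ a ∈ {c | lam.IsAddableCorner c}, g (cellContent a)) *
        (∏ᶠ b ∈ {c | ν.IsRemovableCorner c}, g (cellContent b)) * g (cellContent (i, j)) ^ 2 =
      g (cellContent (i, j) + 1) * g (cellContent (i, j) - 1) *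
        (∏ᶠ a ∈ {c | ν.IsAddableCorner c}, g (cellContent a)) *
          ∏ᶠ b ∈ {c | lam.IsRemovableCorner c}, g (cellContent b) := by
  have hA : (∏ᶠ a ∈ {c | lam.IsAddableCorner c}, g (cellContent a)) * g (cellContent (i, j)) =
      (∏ᶠ a ∈ {c | ν.IsAddableCorner c}, g (cellContent a)) *
        ∏ᶠ a ∈ {c | lam.IsAddableCorner c} ∩ {(i, j + 1), (i + 1, j)}, g (cellContent a) := by
    rw [mul_comm, ← finprod_mem_insert (fun c => g (cellContent c))
        (fun h => h.1 ((mem_iff_of_cells_eq_insert hlam).2 (Or.inl rfl)))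
        (finite_setOf_isAddableCorner lam),
      insert_setOf_isAddableCorner hij hlam,
      finprod_mem_union ((disjoint_setOf_isAddableCorner hij).mono_right Set.inter_subset_right)
        (finite_setOf_isAddableCorner ν) ((Set.toFinite _).subset Set.inter_subset_right)]
  have hR : (∏ᶠ b ∈ {c | lam.IsRemovableCorner c}, g (cellContent b)) *
        ∏ᶠ b ∈ {c | ν.IsRemovableCorner c} ∩ {(i - 1, j), (i, j - 1)}, g (cellContent b) =
      g (cellContent (i, j)) * ∏ᶠ b ∈ {c | ν.IsRemovableCorner c}, g (cellContent b) := by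
    rw [← finprod_mem_insert (fun c => g (cellContent c)) (fun h => hij.1 h.1)
        (finite_setOf_isRemovableCorner ν),
      insert_setOf_isRemovableCorner hij hlam,
      finprod_mem_union (disjoint_setOf_isRemovableCorner hij hlam)
        (finite_setOf_isRemovableCorner lam) ((Set.toFinite _).subset Set.inter_subset_right)]
  have hrb : (i, j + 1) ∈ {c | lam.IsAddableCorner c} →
      (i + 1, j) ∈ {c | lam.IsAddableCorner c} → (i, j + 1) ≠ (i + 1, j) :=
    fun _ _ h => by simp at h
  have hul : (i - 1, j) ∈ {c | ν.IsRemovableCorner c} →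
      (i, j - 1) ∈ {c | ν.IsRemovableCorner c} → (i - 1, j) ≠ (i, j - 1) := by
    rintro hup - h
    obtain rfl : i = 0 := by have := congrArg Prod.fst h; dsimp at this; omega
    exact hij.1 hup.1
  calc _ = ((∏ᶠ a ∈ {c | lam.IsAddableCorner c}, g (cellContent a)) * g (cellContent (i, j))) *
        (g (cellContent (i, j)) * ∏ᶠ b ∈ {c | ν.IsRemovableCorner c}, g (cellContent b)) := by
        rw [sq]; ac_rfl
    _ = _ := by
      rw [hA, ← hR, finprod_mem_inter_pair hrb, finprod_mem_inter_pair hul,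
        ← finprod_right_mul_finprod_up hij hlam g, ← finprod_below_mul_finprod_left hij hlam g]
      ac_rfl

end InsertCell

end YoungDiagram

open RatFunc in
/-- If `λ = ν ∪ {α}` with `α` an addable corner of `ν`, then in `ℚ(u)`:
`∏_{a ∈ A(λ)} (u − c(a)) / ∏_{b ∈ R(λ)} (u − c(b)) =
 ((u − c(α) − 1)(u − c(α) + 1)/(u − c(α))²) ·
 ∏_{a ∈ A(ν)} (u − c(a)) / ∏_{b ∈ R(ν)} (u − c(b))`. -/
theorem addable_removable_content_product_recursion
    (ν lam : YoungDiagram) (α : ℕ × ℕ) (hα : ν.IsAddableCorner α)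
    (hlam : lam.cells = insert α ν.cells) :
    (∏ᶠ a ∈ {c | lam.IsAddableCorner c}, (X - (cellContent a : RatFunc ℚ))) /
        (∏ᶠ b ∈ {c | lam.IsRemovableCorner c}, (X - (cellContent b : RatFunc ℚ))) =
      ((X - (cellContent α : RatFunc ℚ) - 1) * (X - (cellContent α : RatFunc ℚ) + 1) /
          (X - (cellContent α : RatFunc ℚ)) ^ 2) *
        ((∏ᶠ a ∈ {c | ν.IsAddableCorner c}, (X - (cellContent a : RatFunc ℚ))) /
          (∏ᶠ b ∈ {c | ν.IsRemovableCorner c}, (X - (cellContent b : RatFunc ℚ)))) := by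
  obtain ⟨i, j⟩ := α
  have key := YoungDiagram.finprod_addable_mul_finprod_removable_of_cells_eq_insert hα hlam
    fun z : ℤ => X - (z : RatFunc ℚ)
  push_cast at key
  have hprod : ∀ s : Set (ℕ × ℕ), ∏ᶠ b ∈ s, (X - (cellContent b : RatFunc ℚ)) ≠ 0 := fun _ =>
    finprod_mem_induction (· ≠ 0) one_ne_zero (fun _ _ => mul_ne_zero)
      fun _ _ => X_sub_intCast_ne_zero _
  have hα0 := X_sub_intCast_ne_zero (K := ℚ) (cellContent (i, j))
  rw [div_mul_div_comm, div_eq_div_iff (hprod _) (mul_ne_zero (pow_ne_zero 2 hα0) (hprod _))]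
  linear_combination key
end

section
/- Let μ, ν, υ be Young diagrams such that either ν = μ or ν = μ \ {b} for some removable corner b of μ, and either υ = ν or υ = ν ∪ {a} for some addable corner a of ν. Define polynomials in ℤ[z]: c₁ = |μ| if ν = μ, and c₁ = z − c(b) if ν = μ \ {b}; c₂ = z − |υ| if υ = ν, and c₂ = c(a) if υ = ν ∪ {a}. Then c₁ + c₂ = z (as polynomials in ℤ[z]) if and only if μ = υ. -/
open Polynomial

lemma addable_content_inj {ν : YoungDiagram} {a b : ℕ × ℕ}
    (ha : ν.IsAddableCorner a) (hb : ν.IsAddableCorner b)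
    (h : cellContent a = cellContent b) : a = b := by
  by_contra hne
  obtain ⟨a1, a2⟩ := a; obtain ⟨b1, b2⟩ := b
  simp only [cellContent] at h
  have key : ∀ x y u v : ℕ, x ≤ u → y ≤ v →
      IsLowerSet (↑(insert (u, v) ν.cells) : Set (ℕ × ℕ)) →
      ((x, y) = (u, v) ∨ (x, y) ∈ ν) := by
    intro x y u v hx hy hl
    have hle : ((x, y) : ℕ × ℕ) ≤ (u, v) := Prod.mk_le_mk.mpr ⟨hx, hy⟩
    have : ((x, y) : ℕ × ℕ) ∈ (↑(insert (u, v) ν.cells) : Set (ℕ × ℕ)) :=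
      hl hle (by simp)
    simpa [← YoungDiagram.mem_cells] using this
  rcases lt_trichotomy a1 b1 with h1 | h1 | h1
  · have h2 : a2 ≤ b2 := by omega
    rcases key a1 a2 b1 b2 (le_of_lt h1) h2 hb.2 with h' | h'
    · exact hne h'
    · exact ha.1 h'
  · have : a2 = b2 := by omega
    exact hne (by simp [h1, this])
  · have h2 : b2 ≤ a2 := by omega
    rcases key b1 b2 a1 a2 (le_of_lt h1) h2 ha.2 with h' | h'
    · exact hne h'.symm
    · exact hb.1 h'

open Polynomial in
/-- Let `ν = μ` or `ν = μ \ {b}` (for a removable corner `b` of `μ`), and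
`υ = ν` or `υ = ν ∪ {a}` (for an addable corner `a` of `ν`).  With
`c₁ = |μ|` resp. `z − c(b)`, and `c₂ = z − |υ|` resp. `c(a)`, in `ℤ[z]`,
one has `c₁ + c₂ = z` if and only if `μ = υ`. -/
theorem eigenvalue_sum_eq_z_iff (μ ν υ : YoungDiagram) (c₁ c₂ : Polynomial ℤ)
    (h₁ : (ν = μ ∧ c₁ = C (μ.card : ℤ)) ∨
      (∃ b, μ.IsRemovableCorner b ∧ ν.cells = μ.cells.erase b ∧
        c₁ = X - C (cellContent b)))
    (h₂ : (υ = ν ∧ c₂ = X - C (υ.card : ℤ)) ∨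
      (∃ a, ν.IsAddableCorner a ∧ υ.cells = insert a ν.cells ∧
        c₂ = C (cellContent a))) :
    c₁ + c₂ = X ↔ μ = υ := by
  rcases h₁ with ⟨hν, hc₁⟩ | ⟨b, hbrem, hν, hc₁⟩
  · rcases h₂ with ⟨hυ, hc₂⟩ | ⟨a, haadd, hυ, hc₂⟩
    · subst hν hυ
      constructor
      · intro _; rfl
      · intro _; rw [hc₁, hc₂]; ring
    · subst hν
      constructor
      · intro h
        exfalso
        rw [hc₁, hc₂, ← C_add] at h
        exact (Polynomial.X_ne_C _) h.symm
      · intro h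
        exfalso
        have ha_in : a ∈ υ := by
          rw [← YoungDiagram.mem_cells, hυ]; exact Finset.mem_insert_self _ _
        rw [← h] at ha_in
        exact haadd.1 ha_in
  · have hb_in : b ∈ μ := hbrem.1
    have hb_notin_ν : b ∉ ν := by
      rw [← YoungDiagram.mem_cells, hν]; simp
    rcases h₂ with ⟨hυ, hc₂⟩ | ⟨a, haadd, hυ, hc₂⟩
    · subst hυ
      constructor
      · intro h
        exfalso
        rw [hc₁, hc₂] at h
        have : (X : Polynomial ℤ) = C (cellContent b + (υ.card : ℤ)) := by
          rw [C_add]; linear_combination h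
        exact (Polynomial.X_ne_C _) this
      · intro h
        exact absurd (h ▸ hb_in) hb_notin_ν
    · -- ν = μ \ {b}, υ = ν ∪ {a}
      have hb_add : ν.IsAddableCorner b := by
        refine ⟨hb_notin_ν, ?_⟩
        have : insert b ν.cells = μ.cells := by
          rw [hν, Finset.insert_erase (by exact hb_in)]
        rw [this]
        exact μ.isLowerSet
      constructor
      · intro h
        rw [hc₁, hc₂] at h
        have hcont : cellContent a = cellContent b := by
          have : C (cellContent a) = C (cellContent b) := by linear_combination h
          exact C_injective this
        have hab : a = b := addable_content_inj haadd hb_add hcont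
        apply YoungDiagram.ext
        rw [hυ, hab, hν, Finset.insert_erase hb_in]
      · intro h
        have ha_in : a ∈ μ := by
          rw [h, ← YoungDiagram.mem_cells, hυ]; exact Finset.mem_insert_self _ _
        have hab : a = b := by
          by_contra hne
          have : a ∈ ν := by
            rw [← YoungDiagram.mem_cells, hν, Finset.mem_erase]
            exact ⟨hne, ha_in⟩
          exact haadd.1 this
        rw [hc₁, hc₂, hab]; ring
end

section
/- Let ν be a Young diagram, and suppose μ and λ are Young diagrams with μ = ν ∪ {α}, λ = ν ∪ {β} for distinct cells α ≠ β such that α and β are neither in the same row nor in the same column. Then υ = μ ∪ {β} = λ ∪ {α} is a Young diagram, and moreover β is an addable corner of μ and α is an addable corner of λ. -/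
/-- If `μ = ν ∪ {α}` and `λ = ν ∪ {β}` are Young diagrams, where `α ≠ β` are
cells not in `ν` lying neither in the same row nor in the same column, then
`υ = μ ∪ {β} = λ ∪ {α}` is again a Young diagram; in particular `β` is an
addable corner of `μ` and `α` is an addable corner of `λ`. -/
theorem add_two_cells_distinct_rows_cols
    (ν μ lam : YoungDiagram) (α β : ℕ × ℕ)
    (hne : α ≠ β) (hrow : α.1 ≠ β.1) (hcol : α.2 ≠ β.2)
    (hαν : α ∉ ν) (hβν : β ∉ ν)
    (hμ : μ.cells = insert α ν.cells) (hlam : lam.cells = insert β ν.cells) :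
    IsLowerSet (↑(insert β (insert α ν.cells)) : Set (ℕ × ℕ)) ∧
      insert β (insert α ν.cells) = insert α (insert β ν.cells) ∧
      μ.IsAddableCorner β ∧ lam.IsAddableCorner α := by
  have hswap : insert β (insert α ν.cells) = insert α (insert β ν.cells) :=
    by ext x; simp [or_left_comm]
  have hls : IsLowerSet (↑(insert β (insert α ν.cells)) : Set (ℕ × ℕ)) := by
    intro y x hxy hy
    simp only [Finset.coe_insert, Set.mem_insert_iff, Finset.mem_coe] at hy ⊢
    rcases hy with rfl | hy
    · -- y = β, use lam's lower set
      have hx : x ∈ lam := lam.isLowerSet hxy (by simp [hlam])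
      rw [← YoungDiagram.mem_cells, hlam, Finset.mem_insert] at hx
      tauto
    · -- y ∈ insert α ν = μ.cells, use μ's lower set
      have hx : x ∈ μ := μ.isLowerSet hxy (by
        simp only [Finset.mem_coe, hμ, Finset.mem_insert]; exact hy)
      rw [← YoungDiagram.mem_cells, hμ, Finset.mem_insert] at hx
      tauto
  refine ⟨hls, hswap, ⟨?_, ?_⟩, ⟨?_, ?_⟩⟩
  · rw [← YoungDiagram.mem_cells, hμ, Finset.mem_insert]
    rintro (rfl | h) <;> [exact hne rfl; exact hβν h]
  · rw [hμ]; exact hls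
  · rw [← YoungDiagram.mem_cells, hlam, Finset.mem_insert]
    rintro (rfl | h) <;> [exact hne rfl; exact hαν h]
  · rw [hlam, ← hswap]; exact hls
end
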